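/- arXiv:1812.03788 — 2 statements merged into one kernel-verified Lean document; each statement's English description precedes it below -/
import Mathlib

section
/- Let $p$ be an odd prime, $x > 0$ a real number, and for each even Dirichlet character $\chi$ modulo $p$ let $\theta(x, \chi) = \sum_{n \ge 1} \chi(n) e^{-\pi n^2 x / p}$. Let $w : \{1, \dots, \lfloor\sqrt{p/3}\rfloor\} \to \mathbb{R}_{\ge 0}$ and $M(\chi) = \sum_{m \le \sqrt{p/3}} w(m) \overline{\chi}(m)$. Then $\sum_{\chi \in X_p^+} M(\chi) \theta(x, \chi) \ge \tfrac{p-1}{2} \sum_{m \le \sqrt{p/3}} w(m) e^{-\pi m^2 x / p}$ (in particular this sum is a nonnegative real number). -/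
/-!
Expanding `M(χ)` and swapping the finite sums with the theta series, the sum becomes
`∑_m w(m) ∑'_n (∑_{χ even} χ̄(m) χ(n)) e^{-πn²x/p}`. Since `(1 + χ(-1))/2` is the indicator of
the even characters, orthogonality evaluates the inner sum as `(p-1)/2` times the number of
signs `ε = ±1` with `n ≡ εm (mod p)`. So every term is a nonnegative real, and keeping only the
term `n = m` gives the lower bound.
-/

open Finset

namespace DirichletCharacter

variable {n : ℕ}

def pmIndicator (a b : ZMod n) : ℝ := (if a = b then 1 else 0) + (if a = -b then 1 else 0)

lemma pmIndicator_nonneg (a b : ZMod n) : 0 ≤ pmIndicator a b := by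
  unfold pmIndicator; split_ifs <;> norm_num

lemma pmIndicator_le_two (a b : ZMod n) : pmIndicator a b ≤ 2 := by
  unfold pmIndicator; split_ifs <;> norm_num

lemma one_le_pmIndicator_self (a : ZMod n) : 1 ≤ pmIndicator a a := by
  rw [pmIndicator, if_pos rfl]; split_ifs <;> norm_num

lemma conj_apply_of_isUnit (χ : DirichletCharacter ℂ n) {a : ZMod n} (ha : IsUnit a) :
    starRingEnd ℂ (χ a) = χ a⁻¹ := by
  have hinv : χ a⁻¹ * χ a = 1 := by rw [← map_mul, ZMod.inv_mul_of_unit a ha, map_one]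
  have hnorm : ‖χ a‖ = 1 := by simpa using χ.unit_norm_eq_one ha.unit
  rw [eq_inv_of_mul_eq_one_left hinv, Complex.inv_eq_conj hnorm]

lemma ite_even_conj_mul (χ : DirichletCharacter ℂ n) {a : ZMod n} (ha : IsUnit a) (b : ZMod n) :
    (if χ (-1) = 1 then starRingEnd ℂ (χ a) * χ b else 0) =
      (χ a⁻¹ * χ b + χ a⁻¹ * χ (-b)) / 2 := by
  have hneg : χ (-b) = χ (-1) * χ b := by rw [← map_mul, neg_one_mul]
  rw [conj_apply_of_isUnit χ ha, hneg]
  rcases χ.even_or_odd with (h : χ (-1) = 1) | (h : χ (-1) = -1)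
  · rw [if_pos h, h]; ring
  · rw [if_neg (by rw [h]; norm_num), h]; ring

theorem sum_even_conj_mul [NeZero n] {a : ZMod n} (ha : IsUnit a) (b : ZMod n) :
    ∑ χ : DirichletCharacter ℂ n, (if χ (-1) = 1 then starRingEnd ℂ (χ a) * χ b else 0) =
      (n.totient / 2 : ℂ) * pmIndicator a b := by
  simp only [ite_even_conj_mul _ ha, ← sum_div, sum_add_distrib, sum_char_inv_mul_char_eq ℂ ha,
    pmIndicator]
  split_ifs <;> push_cast <;> ring

lemma summable_mul_ofReal (χ : DirichletCharacter ℂ n) {f : ℕ → ℝ} (hf : Summable f) :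
    Summable fun k : ℕ ↦ χ k * (f k : ℂ) :=
  .of_norm_bounded (summable_abs_iff.mpr hf) fun k ↦ by
    simpa [norm_mul] using mul_le_of_le_one_left (abs_nonneg (f k)) (χ.norm_le_one k)

theorem sum_even_conj_mul_tsum [NeZero n] {a : ZMod n} (ha : IsUnit a) {f : ℕ → ℝ}
    (hf : Summable f) :
    ∑ χ : DirichletCharacter ℂ n,
        (if χ (-1) = 1 then starRingEnd ℂ (χ a) * ∑' k : ℕ, χ k * (f k : ℂ) else 0) =
      ((n.totient / 2 * ∑' k : ℕ, pmIndicator a k * f k : ℝ) : ℂ) := by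
  calc _ = ∑ χ : DirichletCharacter ℂ n, ∑' k : ℕ,
          (if χ (-1) = 1 then starRingEnd ℂ (χ a) else 0) * (χ k * (f k : ℂ)) := by
        refine sum_congr rfl fun χ _ ↦ ?_
        split_ifs <;> simp [tsum_mul_left]
    _ = ∑' k : ℕ, ∑ χ : DirichletCharacter ℂ n,
          (if χ (-1) = 1 then starRingEnd ℂ (χ a) * χ k else 0) * (f k : ℂ) := by
        rw [← Summable.tsum_finsetSum fun χ _ ↦ (χ.summable_mul_ofReal hf).mul_left _]
        refine tsum_congr fun k ↦ sum_congr rfl fun χ _ ↦ ?_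
        split_ifs <;> ring
    _ = _ := by
        simp only [← sum_mul, sum_even_conj_mul ha, Complex.ofReal_mul, Complex.ofReal_tsum,
          ← tsum_mul_left]
        push_cast
        exact tsum_congr fun k ↦ by ring

lemma sum_even_sum_mul_conj_mul (s : Finset ℕ) (c : ℕ → ℂ)
    (θ : DirichletCharacter ℂ n → ℂ) :
    ∑ χ : DirichletCharacter ℂ n,
        (if χ (-1) = 1 then (∑ m ∈ s, c m * starRingEnd ℂ (χ m)) * θ χ else 0) =
      ∑ m ∈ s, c m * ∑ χ : DirichletCharacter ℂ n,
        (if χ (-1) = 1 then starRingEnd ℂ (χ m) * θ χ else 0) := by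
  simp only [mul_sum]
  rw [sum_comm]
  refine sum_congr rfl fun χ _ ↦ ?_
  split_ifs
  · exact (sum_mul ..).trans (sum_congr rfl fun m _ ↦ mul_assoc ..)
  · simp only [mul_zero, sum_const_zero]

lemma le_tsum_pmIndicator_mul {f : ℕ → ℝ} (hf : Summable f) (hf0 : ∀ k, 0 ≤ f k) (m : ℕ) :
    f m ≤ ∑' k : ℕ, pmIndicator (m : ZMod n) k * f k := by
  have hsum : Summable fun k : ℕ ↦ pmIndicator (m : ZMod n) k * f k :=
    (hf.mul_left 2).of_nonneg_of_le (fun k ↦ mul_nonneg (pmIndicator_nonneg _ _) (hf0 k))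
      fun k ↦ mul_le_mul_of_nonneg_right (pmIndicator_le_two _ _) (hf0 k)
  calc f m ≤ pmIndicator (m : ZMod n) m * f m :=
        le_mul_of_one_le_left (hf0 m) (one_le_pmIndicator_self _)
    _ ≤ _ := hsum.le_tsum m fun k _ ↦ mul_nonneg (pmIndicator_nonneg _ _) (hf0 k)

end DirichletCharacter

lemma summable_exp_neg_mul_sq {c : ℝ} (hc : 0 < c) :
    Summable fun k : ℕ ↦ Real.exp (-c * k ^ 2) :=
  Real.summable_exp_nat_mul_of_ge (neg_lt_zero.mpr hc) fun k ↦ by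
    exact_mod_cast Nat.le_self_pow two_ne_zero k

lemma floor_sqrt_div_three_lt {p : ℕ} (hp : 0 < p) : ⌊Real.sqrt (p / 3)⌋₊ < p := by
  have hp1 : (1 : ℝ) ≤ p := by exact_mod_cast hp
  exact (Nat.floor_lt' hp.ne').mpr <| (Real.sqrt_lt' (by linarith)).mpr (by nlinarith)

lemma isUnit_natCast_of_pos_of_lt {p m : ℕ} [Fact p.Prime] (h0 : 0 < m) (hlt : m < p) :
    IsUnit (m : ZMod p) :=
  isUnit_iff_ne_zero.mpr fun h ↦
    Nat.not_dvd_of_pos_of_lt h0 hlt ((ZMod.natCast_eq_zero_iff m p).mp h)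

open Classical in
theorem stmt_9_general (p : ℕ) [Fact p.Prime] (x : ℝ) (hx : 0 < x)
    (w : ℕ → ℝ) (hw : ∀ m, 0 ≤ w m) :
    ∃ r : ℝ,
      (∑ χ : DirichletCharacter ℂ p,
          if χ (-1) = 1 then
            (∑ m ∈ Icc 1 ⌊Real.sqrt (p / 3)⌋₊, (w m : ℂ) * (starRingEnd ℂ) (χ m)) *
              (∑' n : ℕ, χ n * (Real.exp (-Real.pi * n ^ 2 * x / p) : ℂ))
          else 0) = (r : ℂ) ∧
      ((p : ℝ) - 1) / 2 *
          ∑ m ∈ Icc 1 ⌊Real.sqrt (p / 3)⌋₊, w m * Real.exp (-Real.pi * m ^ 2 * x / p) ≤ r := by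
  have hp : p.Prime := Fact.out
  have hp1 : (1 : ℝ) ≤ p := by exact_mod_cast hp.one_le
  set M := Icc 1 ⌊Real.sqrt (p / 3)⌋₊
  set E : ℕ → ℝ := fun n ↦ Real.exp (-Real.pi * n ^ 2 * x / p)
  have hE : Summable E :=
    (summable_exp_neg_mul_sq (by positivity : 0 < Real.pi * x / p)).congr fun n ↦ by
      simp only [E]; ring_nf
  have hunit : ∀ m ∈ M, IsUnit (m : ZMod p) := fun m hm ↦
    isUnit_natCast_of_pos_of_lt (mem_Icc.mp hm).1
      ((mem_Icc.mp hm).2.trans_lt (floor_sqrt_div_three_lt hp.pos))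
  have htot : (p.totient : ℝ) = p - 1 := by
    rw [Nat.totient_prime hp, Nat.cast_sub hp.one_le, Nat.cast_one]
  refine ⟨((p : ℝ) - 1) / 2 *
    ∑ m ∈ M, w m * ∑' k : ℕ, DirichletCharacter.pmIndicator (m : ZMod p) k * E k, ?_, ?_⟩
  · rw [DirichletCharacter.sum_even_sum_mul_conj_mul, sum_congr rfl fun m hm ↦ by
      rw [DirichletCharacter.sum_even_conj_mul_tsum (hunit m hm) hE]]
    push_cast [htot, mul_sum]
    exact sum_congr rfl fun m _ ↦ by ring
  · rw [mul_sum, mul_sum]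
    refine sum_le_sum fun m _ ↦ ?_
    gcongr
    · exact hw m
    · exact DirichletCharacter.le_tsum_pmIndicator_mul hE (fun k ↦ (Real.exp_pos _).le) m

open Classical in
theorem stmt_9 (p : ℕ) [Fact p.Prime] (hp : p ≠ 2) (x : ℝ) (hx : 0 < x)
    (w : ℕ → ℝ) (hw : ∀ m, 0 ≤ w m) :
    ∃ r : ℝ,
      (∑ χ : DirichletCharacter ℂ p,
          if χ (-1) = 1 then
            (∑ m ∈ Icc 1 ⌊Real.sqrt (p / 3)⌋₊, (w m : ℂ) * (starRingEnd ℂ) (χ m)) *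
              (∑' n : ℕ, χ n * (Real.exp (-Real.pi * n ^ 2 * x / p) : ℂ))
          else 0) = (r : ℂ) ∧
      ((p : ℝ) - 1) / 2 *
          ∑ m ∈ Icc 1 ⌊Real.sqrt (p / 3)⌋₊, w m * Real.exp (-Real.pi * m ^ 2 * x / p) ≤ r :=
  stmt_9_general p x hx w hw
end

section
/- Let $p$ be prime and $A, N, M$ positive integers with $A \le N$ and $AN \le p$. For a weight $w : \{1,\dots,A\} \to \mathbb{C}$, define $T_w(M, N, A) = \sum_{a_1, a_2 \le A} w(a_1) w(a_2) \, T(a_1, a_2; M, N)$ where $T(a_1, a_2; M, N)$ counts pairs $(n_1, n_2)$ with $M < n_1, n_2 \le M + N$ and $n_1 a_1 \equiv n_2 a_2 \pmod p$. Then $|T_w(M, N, A)| \ll \Big( \sum_{a \le A} |w(a)| \Big)^2 + N \sum_{a_1, a_2 \le A} |w(a_1) w(a_2)| \frac{\gcd(a_1, a_2)}{a_1 + a_2},$ with an absolute implied constant. -/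
/-!
For `(n₁, n₂)` counted by `T(a₁, a₂; M, N)`, the integer `a₁ n₁ - a₂ n₂` is a multiple of `p` lying
in an interval of length `(a₁ + a₂)(N - 1) < 2p`, so it takes at most two values. On the pairs
where it takes a given value, `n₁` determines `n₂` and all the `n₁` lie in one residue class
modulo `a₂ / gcd(a₁, a₂)`; symmetrically for `n₂` modulo `a₁ / gcd(a₁, a₂)`. Hence there are at
most `1 + 2N gcd(a₁, a₂) / (a₁ + a₂)` of them, so `T(a₁, a₂; M, N) ≤ 4 (1 + N gcd(a₁, a₂) / (a₁ + a₂))`,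
and the theorem follows with `C = 4` from the triangle inequality.
-/

open Finset

theorem Int.card_le_div_add_one_of_modEq {s : Finset ℤ} {L : ℤ} {n d : ℕ} (hd : 0 < d)
    (hs : s ⊆ Icc L (L + n)) (hmod : ∀ x ∈ s, ∀ y ∈ s, x ≡ y [ZMOD d]) :
    #s ≤ n / d + 1 := by
  have hcard : #(Icc (0 : ℤ) (n / d : ℕ)) = n / d + 1 := by
    rw [Int.card_Icc, sub_zero, ← Nat.cast_add_one, Int.toNat_natCast]
  rw [← hcard]
  refine card_le_card_of_injOn (fun x => (x - L) / d) (fun x hx => ?_) (fun x hx y hy hxy => ?_)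
  · obtain ⟨hLx, hxU⟩ := mem_Icc.1 (hs hx)
    rw [coe_Icc, Set.mem_Icc, Int.natCast_div]
    exact ⟨Int.ediv_nonneg (by omega) (by omega), Int.ediv_le_ediv (by omega) (by omega)⟩
  · have hrem : (x - L) % d = (y - L) % d := (hmod x hx y hy).sub_right L
    have hx' := Int.mul_ediv_add_emod (x - L) d
    have hy' := Int.mul_ediv_add_emod (y - L) d
    simp only at hxy
    rw [hxy, hrem] at hx'
    omega

theorem card_le_of_mul_sub_mul_eq {F : Finset (ℕ × ℕ)} {M N a₁ a₂ : ℕ} {c : ℤ}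
    (ha₂ : 0 < a₂) (hF : F ⊆ Ioc M (M + N) ×ˢ Ioc M (M + N))
    (hc : ∀ q ∈ F, (a₁ * q.1 - a₂ * q.2 : ℤ) = c) :
    (#F : ℝ) ≤ N * Nat.gcd a₁ a₂ / a₂ + 1 := by
  set g := Nat.gcd a₁ a₂
  have hg : 0 < g := Nat.gcd_pos_of_pos_right _ ha₂
  have hgdvd : g ∣ a₂ := Nat.gcd_dvd_right _ _
  have hinj : Set.InjOn (fun q : ℕ × ℕ => (q.1 : ℤ)) F := by
    intro q hq r hr hqr
    have h₁ : q.1 = r.1 := Int.ofNat_inj.1 hqr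
    have h₂ : (a₂ : ℤ) * q.2 = a₂ * r.2 := by
      have hcq := hc q hq
      rw [h₁, ← hc r hr] at hcq
      linarith
    exact Prod.ext h₁ (by exact_mod_cast mul_left_cancel₀ (by positivity) h₂)
  have hcount : #F ≤ (N - 1) / (a₂ / g) + 1 := by
    rw [← card_image_of_injOn hinj]
    apply Int.card_le_div_add_one_of_modEq (L := M + 1) (Nat.div_pos (Nat.le_of_dvd ha₂ hgdvd) hg)
    · intro x hx
      obtain ⟨q, hq, rfl⟩ := mem_image.1 hx
      have := mem_Ioc.1 (mem_product.1 (hF hq)).1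
      rw [mem_Icc]
      omega
    · intro x hx y hy
      obtain ⟨q, hq, rfl⟩ := mem_image.1 hx
      obtain ⟨r, hr, rfl⟩ := mem_image.1 hy
      have hmul : (a₁ : ℤ) * q.1 ≡ a₁ * r.1 [ZMOD a₂] :=
        Int.modEq_iff_dvd.2 ⟨r.2 - q.2, by linarith [hc q hq, hc r hr]⟩
      simpa [Int.gcd_natCast_natCast, Nat.gcd_comm, g, Int.natCast_div] using
        hmul.cancel_left_div_gcd (by positivity)
  calc (#F : ℝ) ≤ ((N - 1) / (a₂ / g) : ℕ) + 1 := by exact_mod_cast hcount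
    _ ≤ N / (a₂ / g : ℕ) + 1 := by
      gcongr
      exact Nat.cast_div_le.trans (by gcongr; omega)
    _ = N * g / a₂ + 1 := by
      rw [Nat.cast_div hgdvd (by positivity)]
      field_simp

theorem card_le_two_mul_div_add_of_mul_sub_mul_eq {F : Finset (ℕ × ℕ)} {M N a₁ a₂ : ℕ} {c : ℤ}
    (ha₁ : 0 < a₁) (ha₂ : 0 < a₂) (hF : F ⊆ Ioc M (M + N) ×ˢ Ioc M (M + N))
    (hc : ∀ q ∈ F, (a₁ * q.1 - a₂ * q.2 : ℤ) = c) :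
    (#F : ℝ) ≤ 2 * N * Nat.gcd a₁ a₂ / (a₁ + a₂) + 1 := by
  have h₂ := card_le_of_mul_sub_mul_eq ha₂ hF hc
  have h₁ : (#F : ℝ) ≤ N * Nat.gcd a₂ a₁ / a₁ + 1 := by
    rw [← card_image_of_injective F Prod.swap_injective]
    refine card_le_of_mul_sub_mul_eq (M := M) (c := -c) ha₁ (fun q hq => ?_) (fun q hq => ?_) <;>
      obtain ⟨r, hr, rfl⟩ := mem_image.1 hq
    · simpa [and_comm] using hF hr
    · simp only [Prod.fst_swap, Prod.snd_swap]
      linarith [hc r hr]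
  rw [Nat.gcd_comm] at h₁
  have hNg : (0 : ℝ) ≤ N * Nat.gcd a₁ a₂ := by positivity
  rcases le_total a₁ a₂ with h | h
  · refine h₂.trans (add_le_add_left ?_ 1)
    rw [div_le_div_iff₀ (by positivity) (by positivity)]
    nlinarith [(Nat.cast_le (α := ℝ)).2 h]
  · refine h₁.trans (add_le_add_left ?_ 1)
    rw [div_le_div_iff₀ (by positivity) (by positivity)]
    nlinarith [(Nat.cast_le (α := ℝ)).2 h]

/-- The pairs counted by `T(a₁, a₂; M, N)`. -/
def congruencePairs (p M N a₁ a₂ : ℕ) : Finset (ℕ × ℕ) :=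
  (Ioc M (M + N) ×ˢ Ioc M (M + N)).filter
    fun q => (q.1 : ZMod p) * (a₁ : ZMod p) = (q.2 : ZMod p) * (a₂ : ZMod p)

theorem dvd_mul_sub_mul_of_mem_congruencePairs {p M N a₁ a₂ : ℕ} {q : ℕ × ℕ}
    (hq : q ∈ congruencePairs p M N a₁ a₂) : (p : ℤ) ∣ a₁ * q.1 - a₂ * q.2 := by
  rw [← ZMod.intCast_zmod_eq_zero_iff_dvd]
  push_cast
  linear_combination (mem_filter.1 hq).2

theorem card_image_mul_sub_mul_le_two {p M N a₁ a₂ : ℕ} (h : (a₁ + a₂) * (N - 1) < 2 * p) :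
    #((congruencePairs p M N a₁ a₂).image fun q => (a₁ : ℤ) * q.1 - a₂ * q.2) ≤ 2 := by
  calc _ ≤ (a₁ + a₂) * (N - 1) / p + 1 := by
        apply Int.card_le_div_add_one_of_modEq (L := a₁ * (M + 1) - a₂ * (M + N)) (by omega)
        · intro x hx
          obtain ⟨q, hq, rfl⟩ := mem_image.1 hx
          have := mem_product.1 (mem_filter.1 hq).1
          simp only [mem_Ioc] at this
          rw [mem_Icc]
          push_cast [Nat.cast_sub (by omega : 1 ≤ N)]
          constructor <;> nlinarith
        · intro x hx y hy
          obtain ⟨q, hq, rfl⟩ := mem_image.1 hx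
          obtain ⟨r, hr, rfl⟩ := mem_image.1 hy
          exact (Int.modEq_zero_iff_dvd.2 (dvd_mul_sub_mul_of_mem_congruencePairs hq)).trans
            (Int.modEq_zero_iff_dvd.2 (dvd_mul_sub_mul_of_mem_congruencePairs hr)).symm
    _ ≤ 2 := by
      have := Nat.div_lt_of_lt_mul (h.trans_eq (mul_comm 2 p))
      omega

theorem card_congruencePairs_le {p M N a₁ a₂ : ℕ} (ha₁ : 0 < a₁) (ha₂ : 0 < a₂)
    (h : (a₁ + a₂) * (N - 1) < 2 * p) :
    (#(congruencePairs p M N a₁ a₂) : ℝ) ≤ 4 * (1 + N * Nat.gcd a₁ a₂ / (a₁ + a₂)) := by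
  set S := congruencePairs p M N a₁ a₂
  set v : ℕ × ℕ → ℤ := fun q => a₁ * q.1 - a₂ * q.2
  set B : ℝ := 2 * N * Nat.gcd a₁ a₂ / (a₁ + a₂) + 1
  have hfiber : ∀ c ∈ S.image v, (#(S.filter (v · = c)) : ℝ) ≤ B := fun c _ =>
    card_le_two_mul_div_add_of_mul_sub_mul_eq ha₁ ha₂ ((filter_subset _ _).trans (filter_subset _ _))
      fun q hq => (mem_filter.1 hq).2
  calc (#S : ℝ) = ∑ c ∈ S.image v, (#(S.filter (v · = c)) : ℝ) := by
        rw [card_eq_sum_card_image v S]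
        push_cast
        rfl
    _ ≤ #(S.image v) * B := by
      simpa using sum_le_card_nsmul _ _ _ hfiber
    _ ≤ 2 * B := by
      gcongr
      have h₂ : #(S.image v) ≤ 2 := card_image_mul_sub_mul_le_two h
      exact_mod_cast h₂
    _ ≤ 4 * (1 + N * Nat.gcd a₁ a₂ / (a₁ + a₂)) := by
      have : (0 : ℝ) ≤ N * Nat.gcd a₁ a₂ / (a₁ + a₂) := by positivity
      simp only [B]
      ring_nf
      linarith

open Classical in
theorem stmt_13 :
    ∃ C : ℝ, 0 < C ∧
      ∀ (p A N M : ℕ) (w : ℕ → ℂ), p.Prime → 0 < A → 0 < N → 0 < M →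
        A ≤ N → A * N ≤ p →
        norm
            (∑ a₁ ∈ Icc 1 A, ∑ a₂ ∈ Icc 1 A, w a₁ * w a₂ *
              (((Ioc M (M + N) ×ˢ Ioc M (M + N)).filter
                (fun q : ℕ × ℕ =>
                  (q.1 : ZMod p) * (a₁ : ZMod p) = (q.2 : ZMod p) * (a₂ : ZMod p))).card : ℂ)) ≤
          C * ((∑ a ∈ Icc 1 A, norm (w a)) ^ 2 +
            (N : ℝ) * ∑ a₁ ∈ Icc 1 A, ∑ a₂ ∈ Icc 1 A,
              norm (w a₁ * w a₂) * (Nat.gcd a₁ a₂ : ℝ) / (a₁ + a₂)) := by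
  refine ⟨4, by norm_num, fun p A N M w _ hA hN _ _ hANp => ?_⟩
  have hT : ∀ a₁ ∈ Icc 1 A, ∀ a₂ ∈ Icc 1 A, (#(congruencePairs p M N a₁ a₂) : ℝ) ≤
      4 * (1 + N * Nat.gcd a₁ a₂ / (a₁ + a₂)) := by
    intro a₁ h₁ a₂ h₂
    rw [mem_Icc] at h₁ h₂
    refine card_congruencePairs_le h₁.1 h₂.1 ?_
    have : A * (N - 1) < A * N := Nat.mul_lt_mul_of_pos_left (by omega) hA
    calc (a₁ + a₂) * (N - 1) ≤ 2 * A * (N - 1) := Nat.mul_le_mul_right _ (by omega)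
      _ < 2 * p := by rw [mul_assoc]; omega
  calc _ ≤ ∑ a₁ ∈ Icc 1 A, ∑ a₂ ∈ Icc 1 A,
        ‖w a₁ * w a₂‖ * (#(congruencePairs p M N a₁ a₂) : ℝ) := by
        refine (norm_sum_le _ _).trans (sum_le_sum fun a₁ _ => (norm_sum_le _ _).trans_eq
          (sum_congr rfl fun a₂ _ => ?_))
        rw [norm_mul, Complex.norm_natCast]
        rfl
    _ ≤ ∑ a₁ ∈ Icc 1 A, ∑ a₂ ∈ Icc 1 A,
        ‖w a₁ * w a₂‖ * (4 * (1 + N * Nat.gcd a₁ a₂ / (a₁ + a₂))) := by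
      gcongr with a₁ h₁ a₂ h₂
      exact hT a₁ h₁ a₂ h₂
    _ = _ := by
      rw [sq, sum_mul_sum]
      simp only [mul_sum, ← sum_add_distrib, norm_mul]
      refine sum_congr rfl fun a₁ _ => sum_congr rfl fun a₂ _ => ?_
      ring
end
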